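/- arXiv:2306.15034 — 11 statements merged into one kernel-verified Lean document; each statement's English description precedes it below -/
import Mathlib

section
/- Let A be a finite-dimensional evolution algebra over a field K with natural basis B = {e_i}_{i in Λ}, and let I be an ideal of the form I = span{e_i : i in Λ'} for some subset Λ' of Λ. Then I has the absorption property if and only if for every j in Λ \ Λ', the set D^1(j) of first-generation descendants of j in the graph Γ(A,B) is not contained in Λ'. -/
open Submodule

section EvolutionPreamble

/-- The set of `k`-th generation descendants of a vertex in a directed graph
given by an edge relation `E`; `Dk E 0 i = {i}`. -/
def Dk {V : Type*} (E : V → V → Prop) : ℕ → V → Set V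
  | 0, i => {i}
  | n + 1, i => {k | ∃ j ∈ Dk E n i, E j k}

/-- A vertex is cyclic if there is a (possibly trivial) path from it to a vertex
lying on a cycle. -/
def IsCyclicVertex {V : Type*} (E : V → V → Prop) (i : V) : Prop :=
  ∃ j, Relation.ReflTransGen E i j ∧ Relation.TransGen E j j

/-- Connectedness of a directed graph: every nontrivial partition of the
vertex set is crossed by an edge (in one direction or the other). -/
def GraphConnected {V : Type*} (E : V → V → Prop) : Prop :=
  ∀ s : Set V, s.Nonempty → sᶜ.Nonempty → ∃ x ∈ s, ∃ y ∈ sᶜ, E x y ∨ E y x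

variable {K : Type*} [Field K] {A : Type*} [NonUnitalNonAssocRing A]
  [Module K A] [SMulCommClass K A A] [IsScalarTower K A A] {ι : Type*}

/-- A basis is natural if distinct basis vectors multiply to zero. -/
def IsNaturalBasis (B : Module.Basis ι K A) : Prop := ∀ i j, i ≠ j → B i * B j = 0

/-- Edge relation of the directed graph `Γ(A,B)` associated to an evolution
algebra `A` with natural basis `B`: `(i,k)` is an edge iff the structure
constant `w_{ik}` is nonzero. -/
def edge (B : Module.Basis ι K A) (i k : ι) : Prop := B.repr (B i * B i) k ≠ 0

/-- First-generation descendants in `Γ(A,B)`. -/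
def D1 (B : Module.Basis ι K A) (i : ι) : Set ι := {k | edge B i k}

/-- The increasing chain of index sets `λ_k(B)`: `λ_0 = ∅`,
`λ_{k+1}(B) = {i : D¹(i) ⊆ λ_k(B)}`.  In particular
`λ_1(B) = {i : e_i² = 0}`. -/
def lam (B : Module.Basis ι K A) : ℕ → Set ι
  | 0 => ∅
  | n + 1 => {i | ∀ k, edge B i k → k ∈ lam B n}

/-- `I` is a (two-sided) ideal. -/
def IsIdeal (I : Submodule K A) : Prop := ∀ x ∈ I, ∀ a : A, x * a ∈ I ∧ a * x ∈ I

/-- The absorption property: `xA ⊆ I` implies `x ∈ I`. -/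
def HasAbsorption (I : Submodule K A) : Prop := ∀ x : A, (∀ a : A, x * a ∈ I) → x ∈ I

/-- The absorption radical: intersection of all ideals with the absorption property. -/
def rad (K : Type*) (A : Type*) [Field K] [NonUnitalNonAssocRing A]
    [Module K A] [SMulCommClass K A A] [IsScalarTower K A A] : Submodule K A :=
  sInf {I : Submodule K A | IsIdeal I ∧ HasAbsorption I}

lemma rad_isIdeal : IsIdeal (rad K A) := by
  intro x hx a
  rw [rad, Submodule.mem_sInf] at hx
  constructor <;>
    · rw [rad, Submodule.mem_sInf]
      intro I hI
      first
        | exact (hI.1 x (hx I hI) a).1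
        | exact (hI.1 x (hx I hI) a).2

/-- The annihilator `ann(A) = {x : xA = Ax = 0}` as a submodule. -/
def annSub (K : Type*) (A : Type*) [Field K] [NonUnitalNonAssocRing A]
    [Module K A] [SMulCommClass K A A] [IsScalarTower K A A] : Submodule K A where
  carrier := {x | ∀ a : A, x * a = 0 ∧ a * x = 0}
  add_mem' := by
    intro x y hx hy a
    constructor
    · rw [add_mul, (hx a).1, (hy a).1, add_zero]
    · rw [mul_add, (hx a).2, (hy a).2, add_zero]
  zero_mem' := by intro a; simp
  smul_mem' := by
    intro c x hx a
    constructor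
    · rw [smul_mul_assoc, (hx a).1, smul_zero]
    · rw [mul_smul_comm, (hx a).2, smul_zero]

/-- The upper annihilating series: `ann⁰(A) = 0`,
`annⁱ⁺¹(A) = {x : xA ∪ Ax ⊆ annⁱ(A)}`. -/
def annSeries (K : Type*) (A : Type*) [Field K] [NonUnitalNonAssocRing A]
    [Module K A] [SMulCommClass K A A] [IsScalarTower K A A] : ℕ → Submodule K A
  | 0 => ⊥
  | n + 1 =>
    { carrier := {x | ∀ a : A, x * a ∈ annSeries K A n ∧ a * x ∈ annSeries K A n}
      add_mem' := by
        intro x y hx hy a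
        constructor
        · rw [add_mul]; exact add_mem (hx a).1 (hy a).1
        · rw [mul_add]; exact add_mem (hx a).2 (hy a).2
      zero_mem' := by intro a; simp
      smul_mem' := by
        intro c x hx a
        constructor
        · rw [smul_mul_assoc]; exact smul_mem _ c (hx a).1
        · rw [mul_smul_comm]; exact smul_mem _ c (hx a).2 }

/-- The annihilator stabilizing index `asi(A)`. -/
noncomputable def asi (K : Type*) (A : Type*) [Field K] [NonUnitalNonAssocRing A]
    [Module K A] [SMulCommClass K A A] [IsScalarTower K A A] : ℕ :=
  sInf {q : ℕ | annSeries K A q = annSeries K A (q + 1)}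

/-- Product of two submodules (span of pairwise products). -/
def smulSub (I J : Submodule K A) : Submodule K A :=
  Submodule.span K (Set.image2 (· * ·) (I : Set A) (J : Set A))

/-- Powers of a subalgebra/ideal, with `N^{k} = Σ_{i+j=k, i,j ≥ 1} Nⁱ Nʲ`. -/
def npow (I : Submodule K A) : ℕ → Submodule K A
  | 0 => ⊥
  | 1 => I
  | n + 2 => ⨆ i : Fin (n + 1), smulSub (npow I (i.1 + 1)) (npow I (n + 1 - i.1))
  termination_by n => n
  decreasing_by
  · have := i.isLt; omega
  · have := i.isLt; omega

/-- `I` is an ideal of the subalgebra `N`. -/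
def IsIdealIn (N I : Submodule K A) : Prop :=
  I ≤ N ∧ ∀ x ∈ I, ∀ a ∈ N, x * a ∈ I ∧ a * x ∈ I

/-- The (sub)algebra `N` is decomposable: it is the direct sum of two nonzero
ideals of `N`. -/
def DecomposableIn (N : Submodule K A) : Prop :=
  ∃ I J : Submodule K A, IsIdealIn N I ∧ IsIdealIn N J ∧ I ≠ ⊥ ∧ J ≠ ⊥ ∧
    I ⊓ J = ⊥ ∧ I ⊔ J = N

/-- Multiplication inside an ideal `N` (an ideal is closed under products). -/
def subMul {N : Submodule K A} (hN : IsIdeal N) (x y : N) : N :=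
  ⟨(x : A) * (y : A), (hN x x.2 y).1⟩

/-- The induced multiplication on the quotient `A ⧸ I` by an ideal `I`. -/
def quotMul (I : Submodule K A) (hI : IsIdeal I) (x y : A ⧸ I) : A ⧸ I :=
  Quotient.liftOn₂ x y (fun a b => Submodule.Quotient.mk (a * b)) (by
    intro a b a' b' ha hb
    have ha' : a - a' ∈ I := (Submodule.quotientRel_def I).mp ha
    have hb' : b - b' ∈ I := (Submodule.quotientRel_def I).mp hb
    refine (Submodule.Quotient.eq I).mpr ?_
    have h : a * b - a' * b' = a * (b - b') + (a - a') * b' := by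
      rw [mul_sub, sub_mul]; abel
    rw [h]
    exact add_mem (hI _ hb' a).2 (hI _ ha' b').1)

/-- Edge relation of the graph associated to the quotient evolution algebra
`A ⧸ I` relative to a basis `C`. -/
def edgeQ {κ : Type*} (I : Submodule K A) (hI : IsIdeal I)
    (C : Module.Basis κ K (A ⧸ I)) (i k : κ) : Prop :=
  C.repr (quotMul I hI (C i) (C i)) k ≠ 0

end EvolutionPreamble

/-!
For a natural basis, `x e_j = x_j e_j²` (the other products `e_i e_j` vanish). Hence `xA ⊆ I`
says exactly that `e_j² ∈ I` for every `j` in the support of `x`, and `e_j²` lies in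
`span {e_i : i ∈ Λ'}` iff `D¹(j) ⊆ Λ'`.
-/

section NaturalBasis

variable {K : Type*} [Field K] {A : Type*} [NonUnitalNonAssocRing A] [Module K A] {ι : Type*}

theorem basis_sq_mem_span_image_iff (B : Module.Basis ι K A) (j : ι) (s : Set ι) :
    B j * B j ∈ span K (B '' s) ↔ D1 B j ⊆ s := by
  have hD1 : D1 B j = (B.repr (B j * B j)).support := by
    ext k
    simp [D1, edge]
  rw [B.mem_span_image, hD1]

variable [SMulCommClass K A A] [IsScalarTower K A A] {B : Module.Basis ι K A}

theorem IsNaturalBasis.mul_basis (hB : IsNaturalBasis B) (x : A) (j : ι) :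
    x * B j = B.repr x j • (B j * B j) := by
  have h : (LinearMap.mul K A).flip (B j) = (B.coord j).smulRight (B j * B j) := by
    refine B.ext fun i => ?_
    rcases eq_or_ne i j with rfl | hij
    · simp
    · simp [hB i j hij, Finsupp.single_eq_of_ne' hij]
  exact LinearMap.congr_fun h x

theorem IsNaturalBasis.basis_mul (hB : IsNaturalBasis B) (x : A) (j : ι) :
    B j * x = B.repr x j • (B j * B j) := by
  have h : LinearMap.mul K A (B j) = (B.coord j).smulRight (B j * B j) := by
    refine B.ext fun i => ?_
    rcases eq_or_ne i j with rfl | hij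
    · simp
    · simp [hB j i hij.symm, Finsupp.single_eq_of_ne' hij]
  exact LinearMap.congr_fun h x

end NaturalBasis

theorem stmt1_general {K : Type*} [Field K] {A : Type*} [NonUnitalNonAssocRing A]
    [Module K A] [SMulCommClass K A A] [IsScalarTower K A A]
    {ι : Type*} (B : Module.Basis ι K A) (hB : IsNaturalBasis B)
    (Λ' : Set ι) (I : Submodule K A)
    (hspan : I = Submodule.span K (B '' Λ')) :
    HasAbsorption I ↔ ∀ j ∉ Λ', ¬ D1 B j ⊆ Λ' := by
  subst hspan
  constructor
  · intro habs j hj hD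
    refine hj (B.self_mem_span_image.mp (habs _ fun a => ?_))
    rw [hB.basis_mul]
    exact smul_mem _ _ ((basis_sq_mem_span_image_iff B j Λ').mpr hD)
  · intro h x hx
    refine B.mem_span_image.mpr fun k hk => ?_
    by_contra hk'
    have hsq : B k * B k ∈ span K (B '' Λ') := by
      have hxk := hx (B k)
      rwa [hB.mul_basis, smul_mem_iff _ (Finsupp.mem_support_iff.mp hk)] at hxk
    exact h k hk' ((basis_sq_mem_span_image_iff B k Λ').mp hsq)

/-- An ideal spanned by a subset of a natural basis has the absorption property
iff no `j` outside `Λ'` has all its first-generation descendants inside `Λ'`. -/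
theorem stmt1 {K : Type*} [Field K] {A : Type*} [NonUnitalNonAssocRing A]
    [Module K A] [SMulCommClass K A A] [IsScalarTower K A A]
    {ι : Type*} [Fintype ι] (B : Module.Basis ι K A) (hB : IsNaturalBasis B)
    (Λ' : Set ι) (I : Submodule K A) (hI : IsIdeal I)
    (hspan : I = Submodule.span K (B '' Λ')) :
    HasAbsorption I ↔ ∀ j ∉ Λ', ¬ D1 B j ⊆ Λ' :=
  stmt1_general B hB Λ' I hspan
end

section
/- Let A be a finite-dimensional evolution algebra with natural basis B = {e_i}_{i in Λ}, and suppose rad(A) = span{e_i : i in Λ'} for Λ' ⊆ Λ. If j in Λ and D^n(j) ⊆ Λ' for some positive integer n (descendants taken in Γ(A,B)), then j in Λ'. -/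
open Submodule

/-!
If every child of `j` in `Γ(A,B)` lies in `Λ'`, then `e_j² ∈ rad(A)`; since `B` is natural,
`e_j a = a_j e_j²` for every `a`, so `e_j A ⊆ rad(A)` and absorption puts `e_j` in `rad(A)`,
i.e. `j ∈ Λ'`. Climbing back from generation `n` to `j` one generation at a time gives the theorem.
-/

theorem mem_Dk_succ_iff {V : Type*} (E : V → V → Prop) (n : ℕ) (j k : V) :
    k ∈ Dk E (n + 1) j ↔ ∃ m, E j m ∧ k ∈ Dk E n m := by
  induction n generalizing k with
  | zero => simp [Dk]
  | succ n ih =>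
    change (∃ x ∈ Dk E (n + 1) j, E x k) ↔ ∃ m, E j m ∧ ∃ x ∈ Dk E n m, E x k
    simp only [ih]
    grind

section EvolutionAlgebra

variable {K : Type*} [Field K] {A : Type*} [NonUnitalNonAssocRing A]
  [Module K A] [SMulCommClass K A A] {ι : Type*}

theorem rad_hasAbsorption [IsScalarTower K A A] : HasAbsorption (rad K A) :=
  fun x hx => mem_sInf.2 fun I hI => hI.2 x fun a => mem_sInf.1 (hx a) I hI

theorem IsNaturalBasis.mul_eq_smul {B : Module.Basis ι K A} (hB : IsNaturalBasis B)
    (i : ι) (a : A) : B i * a = B.repr a i • (B i * B i) := by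
  suffices LinearMap.mulLeft K (B i) = (B.coord i).smulRight (B i * B i) from
    LinearMap.congr_fun this a
  refine B.ext fun k => ?_
  obtain rfl | hik := eq_or_ne i k
  · simp
  · simp [hB i k hik, Finsupp.single_eq_of_ne hik]

theorem IsNaturalBasis.mem_of_forall_edge_mem {B : Module.Basis ι K A} (hB : IsNaturalBasis B)
    {I : Submodule K A} (hI : HasAbsorption I) {Λ' : Set ι} (hIΛ' : I = span K (B '' Λ'))
    {i : ι} (hi : ∀ k, edge B i k → k ∈ Λ') : i ∈ Λ' := by
  have hsq : B i * B i ∈ I := by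
    rw [hIΛ', B.mem_span_image]
    exact fun k hk => hi k (Finsupp.mem_support_iff.mp hk)
  have hmem : B i ∈ I := hI _ fun a => hB.mul_eq_smul i a ▸ I.smul_mem _ hsq
  rwa [hIΛ', B.self_mem_span_image] at hmem

end EvolutionAlgebra

theorem stmt2_general {K : Type*} [Field K] {A : Type*} [NonUnitalNonAssocRing A]
    [Module K A] [SMulCommClass K A A] [IsScalarTower K A A]
    {ι : Type*} (B : Module.Basis ι K A) (hB : IsNaturalBasis B)
    (Λ' : Set ι) (hrad : rad K A = Submodule.span K (B '' Λ'))
    (j : ι) (n : ℕ) (h : Dk (edge B) n j ⊆ Λ') :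
    j ∈ Λ' := by
  induction n generalizing j with
  | zero => exact h rfl
  | succ n ih =>
    refine hB.mem_of_forall_edge_mem rad_hasAbsorption hrad fun k hk => ih k ?_
    exact fun x hx => h ((mem_Dk_succ_iff _ n j x).2 ⟨k, hk, hx⟩)

/-- If `rad(A) = span{e_i : i ∈ Λ'}` and `Dⁿ(j) ⊆ Λ'` for some `n ≥ 1`,
then `j ∈ Λ'`. -/
theorem stmt2 {K : Type*} [Field K] {A : Type*} [NonUnitalNonAssocRing A]
    [Module K A] [SMulCommClass K A A] [IsScalarTower K A A]
    {ι : Type*} [Fintype ι] (B : Module.Basis ι K A) (hB : IsNaturalBasis B)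
    (Λ' : Set ι) (hrad : rad K A = Submodule.span K (B '' Λ'))
    (j : ι) (n : ℕ) (hn : 1 ≤ n) (h : Dk (edge B) n j ⊆ Λ') :
    j ∈ Λ' :=
  stmt2_general B hB Λ' hrad j n h
end

section
/- Let A be a finite-dimensional evolution algebra with natural basis B = {e_i}_{i in Λ}. Then for every positive integer i, the i-th term of the upper annihilating series satisfies ann^{(i)}(A) = span{e_j : j in λ_i(B)}, where λ_1(B) = {j : e_j^2 = 0} and λ_k(B) = {j : D^1(j) ⊆ λ_{k-1}(B)} for k > 1. -/
open Submodule

/-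
In a natural basis, `x * e_k = x_k e_k²` and `e_k * x = x_k e_k²`, so for any subspace `S`
the elements `x` with `xA ∪ Ax ⊆ S` are exactly the span of those `e_k` with `e_k² ∈ S`.
When `S = span {e_j : j ∈ λ_n(B)}`, the condition `e_k² ∈ S` says that every descendant
of `k` lies in `λ_n(B)`, i.e. `k ∈ λ_{n+1}(B)`; induction on `n` gives the theorem.
-/

section AnnihilatingSeries

variable {K : Type*} [Field K] {A : Type*} [NonUnitalNonAssocRing A] [Module K A] {ι : Type*}

lemma mem_lam_succ_iff (B : Module.Basis ι K A) (n : ℕ) (i : ι) :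
    i ∈ lam B (n + 1) ↔ B i * B i ∈ span K (B '' lam B n) := by
  rw [Module.Basis.mem_span_image]
  exact ⟨fun h k hk => h k (Finsupp.mem_support_iff.mp hk),
    fun h k hk => h (Finsupp.mem_support_iff.mpr hk)⟩

variable [SMulCommClass K A A] [IsScalarTower K A A]

namespace IsNaturalBasis

variable {B : Module.Basis ι K A}

lemma mul_basis_s4 (hB : IsNaturalBasis B) (x : A) (k : ι) :
    x * B k = B.repr x k • (B k * B k) := by
  have h : (LinearMap.mul K A).flip (B k) = (B.coord k).smulRight (B k * B k) :=
    B.ext fun j => by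
      rcases eq_or_ne j k with rfl | hjk
      · simp
      · simp [hB j k hjk, hjk]
  simpa using LinearMap.congr_fun h x

lemma basis_mul_s4 (hB : IsNaturalBasis B) (x : A) (k : ι) :
    B k * x = B.repr x k • (B k * B k) := by
  have h : LinearMap.mul K A (B k) = (B.coord k).smulRight (B k * B k) :=
    B.ext fun j => by
      rcases eq_or_ne j k with rfl | hjk
      · simp
      · simp [hB k j hjk.symm, hjk]
  simpa using LinearMap.congr_fun h x

lemma mem_span_sq_mem_iff (hB : IsNaturalBasis B) (S : Submodule K A) (x : A) :
    x ∈ span K (B '' {k | B k * B k ∈ S}) ↔ ∀ a : A, x * a ∈ S ∧ a * x ∈ S := by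
  constructor
  · intro hx a
    induction hx using Submodule.span_induction with
    | mem y hy =>
      obtain ⟨k, hk, rfl⟩ := hy
      rw [hB.basis_mul_s4 a, hB.mul_basis_s4 a]
      exact ⟨S.smul_mem _ hk, S.smul_mem _ hk⟩
    | zero => simp
    | add y z _ _ hy hz =>
      rw [add_mul, mul_add]
      exact ⟨S.add_mem hy.1 hz.1, S.add_mem hy.2 hz.2⟩
    | smul c y _ hy =>
      rw [smul_mul_assoc, mul_smul_comm]
      exact ⟨S.smul_mem c hy.1, S.smul_mem c hy.2⟩
  · intro hx
    rw [Module.Basis.mem_span_image]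
    intro k hk
    have hxk := (hx (B k)).1
    rw [hB.mul_basis_s4] at hxk
    exact (S.smul_mem_iff (Finsupp.mem_support_iff.mp hk)).mp hxk

lemma annSeries_eq_span_lam (hB : IsNaturalBasis B) (n : ℕ) :
    annSeries K A n = span K (B '' lam B n) := by
  induction n with
  | zero => simp [annSeries, lam]
  | succ n ih =>
    have hlam : lam B (n + 1) = {k | B k * B k ∈ annSeries K A n} := by
      ext k
      rw [ih]
      exact mem_lam_succ_iff B n k
    ext x
    rw [hlam, hB.mem_span_sq_mem_iff]
    rfl

end IsNaturalBasis

end AnnihilatingSeries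

theorem stmt4_general {K : Type*} [Field K] {A : Type*} [NonUnitalNonAssocRing A]
    [Module K A] [SMulCommClass K A A] [IsScalarTower K A A]
    {ι : Type*} (B : Module.Basis ι K A) (hB : IsNaturalBasis B)
    (i : ℕ) :
    annSeries K A i = Submodule.span K (B '' lam B i) :=
  hB.annSeries_eq_span_lam i

/-- The terms of the upper annihilating series are spanned by the basis
elements indexed by `λ_i(B)`. -/
theorem stmt4 {K : Type*} [Field K] {A : Type*} [NonUnitalNonAssocRing A]
    [Module K A] [SMulCommClass K A A] [IsScalarTower K A A]
    {ι : Type*} [Fintype ι] (B : Module.Basis ι K A) (hB : IsNaturalBasis B)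
    (i : ℕ) (hi : 1 ≤ i) :
    annSeries K A i = Submodule.span K (B '' lam B i) :=
  stmt4_general B hB i
end

section
/- Let A be a finite-dimensional evolution algebra with natural basis B = {e_i}_{i in Λ} and m = asi(A). If μ is a cycle in the graph Γ(A,B), then no vertex of μ belongs to λ_m(B). -/
open Submodule

theorem not_mem_lam_of_transGen_self {K : Type*} [Field K] {A : Type*}
    [NonUnitalNonAssocRing A] [Module K A] [SMulCommClass K A A] [IsScalarTower K A A]
    {ι : Type*} (B : Module.Basis ι K A) (n : ℕ) {i : ι}
    (hi : Relation.TransGen (edge B) i i) : i ∉ lam B n := by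
  induction n generalizing i with
  | zero => exact id
  | succ n ih =>
    intro hmem
    obtain ⟨k, hik, hki⟩ := Relation.TransGen.head'_iff.mp hi
    -- the successor `k` lies on the rotated cycle `k → ⋯ → i → k`
    exact ih (Relation.TransGen.tail' hki hik) (hmem k hik)

theorem stmt6_general {K : Type*} [Field K] {A : Type*} [NonUnitalNonAssocRing A]
    [Module K A] [SMulCommClass K A A] [IsScalarTower K A A]
    {ι : Type*} (B : Module.Basis ι K A)
    (j : ι) (hj : Relation.TransGen (edge B) j j) :
    j ∉ lam B (asi K A) :=
  not_mem_lam_of_transGen_self B (asi K A) hj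

/-- No vertex lying on a cycle of `Γ(A,B)` belongs to `λ_m(B)`, `m = asi(A)`. -/
theorem stmt6 {K : Type*} [Field K] {A : Type*} [NonUnitalNonAssocRing A]
    [Module K A] [SMulCommClass K A A] [IsScalarTower K A A]
    {ι : Type*} [Fintype ι] (B : Module.Basis ι K A) (hB : IsNaturalBasis B)
    (j : ι) (hj : Relation.TransGen (edge B) j j) :
    j ∉ lam B (asi K A) :=
  stmt6_general B j hj
end

section
/- Let A be a finite-dimensional evolution algebra with natural basis B and m = asi(A). If i is a cyclic vertex of Γ(A,B) (there is a path from i to a cycle), then i does not belong to λ_m(B). -/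
open Submodule

/-!
Each `λ_n(B)` is closed under taking descendants in `Γ(A,B)`. A vertex `j` on a cycle lies in
no `λ_n(B)`: if `j ∈ λ_{n+1}(B)`, its successor on the cycle lies in `λ_n(B)`, and following the
cycle back to `j` would put `j` in `λ_n(B)`. A cyclic vertex reaches such a `j`, so it lies in no
`λ_n(B)` either, in particular not in `λ_m(B)`.
-/

section Lam

variable {K : Type*} [Field K] {A : Type*} [NonUnitalNonAssocRing A] [Module K A] {ι : Type*}
  (B : Module.Basis ι K A)

lemma lam_subset_succ (n : ℕ) : lam B n ⊆ lam B (n + 1) := by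
  induction n with
  | zero => simp [lam]
  | succ n ih => exact fun _ hx k hk => ih (hx k hk)

lemma mem_lam_of_edge {n : ℕ} {i k : ι} (hi : i ∈ lam B n) (h : edge B i k) : k ∈ lam B n := by
  cases n with
  | zero => simp [lam] at hi
  | succ n => exact lam_subset_succ B n (hi k h)

lemma mem_lam_of_reflTransGen {n : ℕ} {i j : ι} (hi : i ∈ lam B n)
    (h : Relation.ReflTransGen (edge B) i j) : j ∈ lam B n := by
  induction h with
  | refl => exact hi
  | tail _ hjk ih => exact mem_lam_of_edge B ih hjk

lemma notMem_lam_of_transGen_self (n : ℕ) {j : ι} (hj : Relation.TransGen (edge B) j j) :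
    j ∉ lam B n := by
  induction n with
  | zero => simp [lam]
  | succ n ih =>
    intro hjn
    obtain ⟨k, hjk, hkj⟩ := Relation.TransGen.head'_iff.mp hj
    exact ih (mem_lam_of_reflTransGen B (hjn k hjk) hkj)

lemma notMem_lam_of_isCyclicVertex (n : ℕ) {i : ι} (hi : IsCyclicVertex (edge B) i) :
    i ∉ lam B n := by
  obtain ⟨j, hij, hj⟩ := hi
  exact fun hin => notMem_lam_of_transGen_self B n hj (mem_lam_of_reflTransGen B hin hij)

end Lam

theorem stmt7_general {K : Type*} [Field K] {A : Type*} [NonUnitalNonAssocRing A]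
    [Module K A] [SMulCommClass K A A] [IsScalarTower K A A]
    {ι : Type*} (B : Module.Basis ι K A)
    (i : ι) (hi : IsCyclicVertex (edge B) i) :
    i ∉ lam B (asi K A) :=
  notMem_lam_of_isCyclicVertex B _ hi

/-- A cyclic vertex of `Γ(A,B)` does not belong to `λ_m(B)`, `m = asi(A)`. -/
theorem stmt7 {K : Type*} [Field K] {A : Type*} [NonUnitalNonAssocRing A]
    [Module K A] [SMulCommClass K A A] [IsScalarTower K A A]
    {ι : Type*} [Fintype ι] (B : Module.Basis ι K A) (hB : IsNaturalBasis B)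
    (i : ι) (hi : IsCyclicVertex (edge B) i) :
    i ∉ lam B (asi K A) :=
  stmt7_general B i hi
end

section
/- Let A be a finite-dimensional evolution algebra with natural basis B and m = asi(A). If i ∈ λ_m(B) \ λ_1(B), then there exists a path in Γ(A,B) from i to some vertex j ∈ λ_1(B), i.e., to a sink. -/
open Submodule

theorem exists_mem_lam_one_reflTransGen_of_mem_lam {K : Type*} [Field K] {A : Type*}
    [NonUnitalNonAssocRing A] [Module K A] [SMulCommClass K A A] [IsScalarTower K A A]
    {ι : Type*} (B : Module.Basis ι K A) {n : ℕ} {i : ι} (hi : i ∈ lam B n) :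
    ∃ j ∈ lam B 1, Relation.ReflTransGen (edge B) i j := by
  induction n generalizing i with
  | zero => exact (Set.notMem_empty i hi).elim
  | succ n ih =>
    by_cases hsink : i ∈ lam B 1
    · exact ⟨i, hsink, .refl⟩
    · obtain ⟨k, hik⟩ : ∃ k, edge B i k := by simpa [lam] using hsink
      obtain ⟨j, hj, hkj⟩ := ih (hi k hik)
      exact ⟨j, hj, .head hik hkj⟩

theorem stmt8_general {K : Type*} [Field K] {A : Type*} [NonUnitalNonAssocRing A]
    [Module K A] [SMulCommClass K A A] [IsScalarTower K A A]
    {ι : Type*} (B : Module.Basis ι K A)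
    (i : ι) (hi : i ∈ lam B (asi K A)) :
    ∃ j ∈ lam B 1, Relation.ReflTransGen (edge B) i j :=
  exists_mem_lam_one_reflTransGen_of_mem_lam B hi

/-- From each vertex of `λ_m(B) \ λ_1(B)` there is a path to a sink
(a vertex of `λ_1(B)`). -/
theorem stmt8 {K : Type*} [Field K] {A : Type*} [NonUnitalNonAssocRing A]
    [Module K A] [SMulCommClass K A A] [IsScalarTower K A A]
    {ι : Type*} [Fintype ι] (B : Module.Basis ι K A) (hB : IsNaturalBasis B)
    (i : ι) (hi : i ∈ lam B (asi K A)) (hi1 : i ∉ lam B 1) :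
    ∃ j ∈ lam B 1, Relation.ReflTransGen (edge B) i j :=
  stmt8_general B i hi
end

section
/- Let A be a finite-dimensional evolution algebra. Then rad(A) is a nilpotent ideal of A. -/
open Submodule

/-!
The upper annihilating series `annⁱ(A)` is an increasing chain of ideals, so in finite
dimension it stabilises: `annⁿ⁺¹(A) = annⁿ(A)` for some `n`. An evolution algebra is
commutative, so this equality says exactly that `annⁿ(A)` has the absorption property, whence
`rad(A) ≤ annⁿ(A)`. Each multiplication moves an element of `annⁱ⁺¹(A)` into `annⁱ(A)`, and
every way of bracketing `2ⁿ` factors has a chain of `n` nested products, so `rad(A)^(2ⁿ) = 0`.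
-/

section EvolutionAlgebra

variable {K : Type*} [Field K] {A : Type*} [NonUnitalNonAssocRing A] [Module K A]

lemma npow_add_two_le {I J : Submodule K A} {m : ℕ}
    (h : ∀ a b, a + b = m + 2 → 0 < a → 0 < b → ∀ u ∈ npow I a, ∀ v ∈ npow I b, u * v ∈ J) :
    npow I (m + 2) ≤ J := by
  rw [npow]
  refine iSup_le fun i => span_le.mpr ?_
  rintro _ ⟨u, hu, v, hv, rfl⟩
  have := i.isLt
  exact h _ _ (by omega) (by omega) (by omega) u hu v hv

lemma npow_le_of_le {I J : Submodule K A} (hJ : IsIdeal J) (hIJ : I ≤ J) (k : ℕ) :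
    npow I k ≤ J := by
  induction k using Nat.strong_induction_on with
  | _ k ih =>
    match k with
    | 0 => rw [npow]; exact bot_le
    | 1 => rw [npow]; exact hIJ
    | m + 2 =>
      exact npow_add_two_le fun a b hab _ _ u hu v _ => (hJ u (ih a (by omega) hu) v).1

variable [SMulCommClass K A A] [IsScalarTower K A A] {ι : Type*}

theorem IsNaturalBasis.mul_comm {B : Module.Basis ι K A} (hB : IsNaturalBasis B)
    (x y : A) : x * y = y * x := by
  have : LinearMap.mul K A = (LinearMap.mul K A).flip := B.ext fun i => B.ext fun j => by
    rcases eq_or_ne i j with rfl | hij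
    · rfl
    · simp [hB i j hij, hB j i hij.symm]
  exact LinearMap.congr_fun₂ this x y

lemma mem_annSeries_succ {x : A} {n : ℕ} :
    x ∈ annSeries K A (n + 1) ↔ ∀ a : A, x * a ∈ annSeries K A n ∧ a * x ∈ annSeries K A n :=
  Iff.rfl

lemma annSeries_monotone : Monotone (annSeries K A) := by
  refine monotone_nat_of_le_succ fun n => ?_
  induction n with
  | zero => exact bot_le
  | succ n ih => exact fun x hx a => ⟨ih (hx a).1, ih (hx a).2⟩

lemma annSeries_isIdeal (n : ℕ) : IsIdeal (annSeries K A n) := by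
  cases n with
  | zero => rintro x hx a; simp [(mem_bot K).mp hx]
  | succ n =>
    intro x hx a
    exact ⟨annSeries_monotone n.le_succ (hx a).1, annSeries_monotone n.le_succ (hx a).2⟩

lemma exists_annSeries_succ_eq [IsNoetherian K A] :
    ∃ n, annSeries K A (n + 1) = annSeries K A n := by
  obtain ⟨n, hn⟩ :=
    monotone_stabilizes_iff_noetherian.mpr inferInstance ⟨annSeries K A, annSeries_monotone⟩
  exact ⟨n, (hn (n + 1) n.le_succ).symm⟩

lemma hasAbsorption_annSeries (hcomm : ∀ x y : A, x * y = y * x) {n : ℕ}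
    (hn : annSeries K A (n + 1) = annSeries K A n) : HasAbsorption (annSeries K A n) :=
  fun x hx => hn ▸ mem_annSeries_succ.mpr fun a => ⟨hx a, hcomm a x ▸ hx a⟩

lemma npow_le_annSeries {I : Submodule K A} {n j : ℕ} (hI : I ≤ annSeries K A (n + j))
    {k : ℕ} (hk : 2 ^ j ≤ k) : npow I k ≤ annSeries K A n := by
  induction j generalizing n k with
  | zero => exact npow_le_of_le (annSeries_isIdeal n) hI k
  | succ j ih =>
    have hI' : I ≤ annSeries K A (n + 1 + j) := by convert hI using 2; omega
    have hpos := j.one_le_two_pow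
    rw [pow_succ] at hk
    obtain ⟨m, rfl⟩ : ∃ m, k = m + 2 := ⟨k - 2, by omega⟩
    refine npow_add_two_le fun a b hab _ _ u hu v hv => ?_
    rcases le_or_gt (2 ^ j) a with ha | ha
    · exact (mem_annSeries_succ.mp (ih hI' ha hu) v).1
    · exact (mem_annSeries_succ.mp (ih hI' (by omega) hv) u).2

end EvolutionAlgebra

/-- The absorption radical of a finite-dimensional evolution algebra is a
nilpotent ideal. -/
theorem stmt10 {K : Type*} [Field K] {A : Type*} [NonUnitalNonAssocRing A]
    [Module K A] [SMulCommClass K A A] [IsScalarTower K A A]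
    {ι : Type*} [Fintype ι] (B : Module.Basis ι K A) (hB : IsNaturalBasis B) :
    IsIdeal (rad K A) ∧ ∃ k : ℕ, 0 < k ∧ npow (rad K A) k = ⊥ := by
  have : Module.Finite K A := Module.Finite.of_basis B
  obtain ⟨n, hn⟩ := exists_annSeries_succ_eq (K := K) (A := A)
  have hrad : rad K A ≤ annSeries K A (0 + n) := by
    rw [zero_add]
    exact sInf_le ⟨annSeries_isIdeal n, hasAbsorption_annSeries hB.mul_comm hn⟩
  exact ⟨rad_isIdeal, 2 ^ n, n.two_pow_pos, le_bot_iff.mp (npow_le_annSeries hrad le_rfl)⟩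
end

section
/- Let A be a finite-dimensional evolution algebra with natural basis B. Then the following are equivalent: (i) A = rad(A); (ii) the associated graph Γ(A,B) has no cycles; (iii) A is nilpotent. -/
open Submodule

/-
If `Γ(A,B)` has no cycle, the number of ancestors of a vertex is a rank function that strictly
increases along edges and stays below `n = |ι|`. Since `e_i e_j = 0` for `i ≠ j`, a product `x y`
is supported on the successors of the common support of `x` and `y`; hence by induction every
element of `A^(2^m)` is supported on vertices of rank at least `m`, and `A^(2^n) = 0`.
Conversely, multiplying by `e_v` where `v` lies on a cycle moves a nonzero coordinate along the
cycle, so no power of `A` vanishes. A nilpotent algebra is contained in every absorbing ideal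
(absorb the powers one at a time from the top), so `rad(A) = A`. Finally, the vertices from
which no cycle can be reached span an ideal with the absorption property, so `rad(A) = A`
forces every vertex to be of this kind.
-/

open Relation

theorem exists_rank_lt_card_of_acyclic {V : Type*} [Finite V] {E : V → V → Prop}
    (h : ∀ v, ¬ TransGen E v v) :
    ∃ r : V → ℕ, (∀ v, r v < Nat.card V) ∧ ∀ v w, E v w → r v < r w := by
  refine ⟨fun v => {u | TransGen E u v}.ncard, fun v => ?_, fun v w hvw => ?_⟩
  · exact Set.ncard_lt_card fun huniv => h v (Set.eq_univ_iff_forall.mp huniv v)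
  · refine Set.ncard_lt_ncard ⟨fun u huv => huv.tail hvw, fun hsub => h v ?_⟩
    exact hsub (TransGen.single hvw)

theorem Module.Basis.mem_span_image_iff_repr_ne_zero {R M ι : Type*} [Semiring R]
    [AddCommMonoid M] [Module R M] (b : Module.Basis ι R M) {S : Set ι} {x : M} :
    x ∈ span R (b '' S) ↔ ∀ i, b.repr x i ≠ 0 → i ∈ S := by
  simp only [Module.Basis.mem_span_image, Set.subset_def, Finset.mem_coe,
    Finsupp.mem_support_iff]

section Powers

variable {K : Type*} [Field K] {A : Type*} [NonUnitalNonAssocRing A] [Module K A]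

theorem npow_one_eq_self (I : Submodule K A) : npow I 1 = I := by
  rw [npow]

theorem npow_add_two (I : Submodule K A) (n : ℕ) :
    npow I (n + 2) = ⨆ i : Fin (n + 1), smulSub (npow I (i.1 + 1)) (npow I (n + 1 - i.1)) := by
  rw [npow]

theorem mul_mem_npow_succ {I : Submodule K A} {n : ℕ} {x y : A} (hx : x ∈ npow I (n + 1))
    (hy : y ∈ I) : x * y ∈ npow I (n + 2) := by
  rw [npow_add_two]
  refine mem_iSup_of_mem ⟨n, n.lt_succ_self⟩ (subset_span (Set.mem_image2_of_mem hx ?_))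
  rwa [Nat.add_sub_cancel_left, npow_one_eq_self]

theorem HasAbsorption.top_le_of_npow_eq_bot {I : Submodule K A} (hI : HasAbsorption I) {k : ℕ}
    (hk : 0 < k) (hnil : npow (⊤ : Submodule K A) k = ⊥) : ⊤ ≤ I := by
  have hpow : ∀ n ≤ k - 1, npow (⊤ : Submodule K A) (n + 1) ≤ I := fun n hn =>
    Nat.decreasingInduction (motive := fun n _ => npow (⊤ : Submodule K A) (n + 1) ≤ I)
      (fun _ _ hle x hx => hI x fun a => hle (mul_mem_npow_succ hx mem_top))
      (by rw [Nat.sub_add_cancel hk, hnil]; exact bot_le) hn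
  simpa only [zero_add, npow_one_eq_self] using hpow 0 (Nat.zero_le _)

variable [SMulCommClass K A A] [IsScalarTower K A A]

theorem rad_eq_top_of_npow_eq_bot {k : ℕ} (hk : 0 < k) (hnil : npow (⊤ : Submodule K A) k = ⊥) :
    rad K A = ⊤ :=
  eq_top_iff.mpr (le_sInf fun _ hI => HasAbsorption.top_le_of_npow_eq_bot hI.2 hk hnil)

end Powers

namespace IsNaturalBasis

variable {K : Type*} [Field K] {A : Type*} [NonUnitalNonAssocRing A]
  [Module K A] [SMulCommClass K A A] [IsScalarTower K A A] {ι : Type*} [Fintype ι]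
  {B : Module.Basis ι K A}

theorem mul_eq_sum (hB : IsNaturalBasis B) (x y : A) :
    x * y = ∑ i, (B.repr x i * B.repr y i) • (B i * B i) := by
  conv_lhs => rw [← B.sum_repr x, ← B.sum_repr y]
  rw [Finset.sum_mul_sum]
  refine Finset.sum_congr rfl fun i _ => ?_
  rw [Finset.sum_eq_single i]
  · rw [smul_mul_assoc, mul_smul_comm, smul_smul]
  · intro j _ hji
    rw [smul_mul_assoc, mul_smul_comm, hB i j hji.symm, smul_zero, smul_zero]
  · exact fun hi => absurd (Finset.mem_univ i) hi

theorem repr_mul_basis (hB : IsNaturalBasis B) (x : A) (j k : ι) :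
    B.repr (x * B j) k = B.repr x j * B.repr (B j * B j) k := by
  rw [hB.mul_eq_sum, Finset.sum_eq_single j]
  · simp
  · intro i _ hij
    simp [hij.symm]
  · exact fun hj => absurd (Finset.mem_univ j) hj

theorem mul_mem_span (hB : IsNaturalBasis B) {S T : Set ι}
    (hST : ∀ i ∈ S, ∀ k, edge B i k → k ∈ T) {x y : A}
    (hxy : ∀ i, B.repr x i ≠ 0 → B.repr y i ≠ 0 → i ∈ S) :
    x * y ∈ span K (B '' T) := by
  rw [hB.mul_eq_sum]
  refine sum_mem fun i _ => ?_
  by_cases hi : B.repr x i * B.repr y i = 0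
  · rw [hi, zero_smul]
    exact zero_mem _
  · have hiS := hxy i (left_ne_zero_of_mul hi) (right_ne_zero_of_mul hi)
    exact smul_mem _ _ (B.mem_span_image_iff_repr_ne_zero.mpr (hST i hiS))

theorem isIdeal_span (hB : IsNaturalBasis B) {S : Set ι}
    (hS : ∀ i ∈ S, ∀ k, edge B i k → k ∈ S) : IsIdeal (span K (B '' S)) := by
  intro x hx a
  have hxS := B.mem_span_image_iff_repr_ne_zero.mp hx
  exact ⟨hB.mul_mem_span hS fun i hi _ => hxS i hi,
    hB.mul_mem_span hS fun i _ hi => hxS i hi⟩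

theorem hasAbsorption_span_not_isCyclicVertex (hB : IsNaturalBasis B) :
    HasAbsorption (span K (B '' {i | ¬ IsCyclicVertex (edge B) i})) := by
  intro x hx
  refine B.mem_span_image_iff_repr_ne_zero.mpr fun i hi hcyc => ?_
  obtain ⟨k, hik, hk⟩ : ∃ k, edge B i k ∧ IsCyclicVertex (edge B) k := by
    obtain ⟨j, hij, hj⟩ := hcyc
    rcases hij.cases_head with rfl | ⟨k, hik, hkj⟩
    · obtain ⟨k, hik, hki⟩ := TransGen.head'_iff.mp hj
      exact ⟨k, hik, i, hki, hj⟩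
    · exact ⟨k, hik, j, hkj, hj⟩
  have hxk : B.repr (x * B i) k ≠ 0 := by
    rw [hB.repr_mul_basis]
    exact mul_ne_zero hi hik
  exact B.mem_span_image_iff_repr_ne_zero.mp (hx (B i)) k hxk hk

theorem rad_le_span_not_isCyclicVertex (hB : IsNaturalBasis B) :
    rad K A ≤ span K (B '' {i | ¬ IsCyclicVertex (edge B) i}) := by
  refine sInf_le ⟨hB.isIdeal_span fun i hi k hik hk => hi ?_,
    hB.hasAbsorption_span_not_isCyclicVertex⟩
  obtain ⟨j, hkj, hj⟩ := hk
  exact ⟨j, hkj.head hik, hj⟩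

theorem npow_top_le_span_rank_ge (hB : IsNaturalBasis B) {r : ι → ℕ}
    (hr : ∀ v w, edge B v w → r v < r w) (m : ℕ) {n : ℕ} (hn : 2 ^ m ≤ n) :
    npow (⊤ : Submodule K A) n ≤ span K (B '' {v | m ≤ r v}) := by
  induction m generalizing n with
  | zero => simp [B.span_eq]
  | succ m ih =>
    obtain ⟨n, rfl⟩ : ∃ n', n = n' + 2 :=
      ⟨n - 2, by have := Nat.one_lt_two_pow_iff.mpr m.succ_ne_zero; omega⟩
    have hST : ∀ v ∈ {v | m ≤ r v}, ∀ w, edge B v w → w ∈ {v | m + 1 ≤ r v} :=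
      fun v hv w hvw => hv.trans_lt (hr v w hvw)
    rw [npow_add_two]
    refine iSup_le fun ⟨i, _⟩ => span_le.mpr ?_
    rintro _ ⟨x, hx, y, hy, rfl⟩
    have : 2 ^ m ≤ i + 1 ∨ 2 ^ m ≤ n + 1 - i := by rw [pow_succ] at hn; omega
    rcases this with hi | hi
    · have hxS := B.mem_span_image_iff_repr_ne_zero.mp (ih hi hx)
      exact hB.mul_mem_span hST fun v hv _ => hxS v hv
    · have hyS := B.mem_span_image_iff_repr_ne_zero.mp (ih hi hy)
      exact hB.mul_mem_span hST fun v _ hv => hyS v hv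

theorem npow_top_eq_bot_of_acyclic (hB : IsNaturalBasis B)
    (h : ∀ j, ¬ TransGen (edge B) j j) : npow (⊤ : Submodule K A) (2 ^ Nat.card ι) = ⊥ := by
  obtain ⟨r, hr_lt, hr⟩ := exists_rank_lt_card_of_acyclic h
  have hempty : {v | Nat.card ι ≤ r v} = ∅ :=
    Set.eq_empty_of_forall_notMem fun v hv => (hv.trans_lt (hr_lt v)).false
  have hle := hB.npow_top_le_span_rank_ge hr (Nat.card ι) le_rfl
  rwa [hempty, Set.image_empty, span_empty, le_bot_iff] at hle

theorem npow_top_ne_bot_of_cycle (hB : IsNaturalBasis B) {j : ι}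
    (hj : TransGen (edge B) j j) (n : ℕ) : npow (⊤ : Submodule K A) (n + 1) ≠ ⊥ := by
  have hcycle : ∀ n, ∃ x ∈ npow (⊤ : Submodule K A) (n + 1),
      ∃ v, TransGen (edge B) v v ∧ B.repr x v ≠ 0 := by
    intro n
    induction n with
    | zero => exact ⟨B j, by rw [npow_one_eq_self]; exact mem_top, j, hj, by simp⟩
    | succ n ih =>
      obtain ⟨x, hx, v, hv, hxv⟩ := ih
      obtain ⟨w, hvw, hwv⟩ := TransGen.head'_iff.mp hv
      refine ⟨x * B v, mul_mem_npow_succ hx mem_top, w, TransGen.tail' hwv hvw, ?_⟩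
      rw [hB.repr_mul_basis]
      exact mul_ne_zero hxv hvw
  obtain ⟨x, hx, v, -, hxv⟩ := hcycle n
  intro hbot
  rw [hbot, mem_bot] at hx
  simp [hx] at hxv

end IsNaturalBasis

/-- Equivalence: `A = rad(A)` ↔ `Γ(A,B)` has no cycles ↔ `A` is nilpotent. -/
theorem stmt11 {K : Type*} [Field K] {A : Type*} [NonUnitalNonAssocRing A]
    [Module K A] [SMulCommClass K A A] [IsScalarTower K A A]
    {ι : Type*} [Fintype ι] (B : Module.Basis ι K A) (hB : IsNaturalBasis B) :
    (rad K A = (⊤ : Submodule K A) ↔ ∀ j : ι, ¬ Relation.TransGen (edge B) j j) ∧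
      ((∀ j : ι, ¬ Relation.TransGen (edge B) j j) ↔
        ∃ k : ℕ, 0 < k ∧ npow (⊤ : Submodule K A) k = ⊥) := by
  have acyclic_iff_nilpotent : (∀ j, ¬ TransGen (edge B) j j) ↔
      ∃ k : ℕ, 0 < k ∧ npow (⊤ : Submodule K A) k = ⊥ :=
    ⟨fun h => ⟨2 ^ Nat.card ι, by positivity, hB.npow_top_eq_bot_of_acyclic h⟩,
      fun ⟨k, hk, hnil⟩ j hj =>
        hB.npow_top_ne_bot_of_cycle hj (k - 1) (by rwa [Nat.sub_add_cancel hk])⟩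
  refine ⟨⟨fun hrad j hj => ?_, fun h => ?_⟩, acyclic_iff_nilpotent⟩
  · have hBj := hB.rad_le_span_not_isCyclicVertex (hrad ▸ mem_top : B j ∈ rad K A)
    exact B.mem_span_image_iff_repr_ne_zero.mp hBj j (by simp) ⟨j, .refl, hj⟩
  · obtain ⟨k, hk, hnil⟩ := acyclic_iff_nilpotent.mp h
    exact rad_eq_top_of_npow_eq_bot hk hnil
end

section
/- There exists a 3-dimensional evolution algebra A with natural basis {e_1, e_2, e_3} satisfying e_1^2 = e_2^2 = e_2 + e_3 and e_3^2 = -(e_2 + e_3), such that I = span{e_2 + e_3} is a nilpotent ideal of A (indeed I^2 = 0) but I is not contained in rad(A); in fact rad(A) = ann(A) = {0}. -/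
open Submodule

section Example14

/-- The underlying space of the example: a 3-dimensional rational vector space. -/
def E3 : Type := Fin 3 → ℚ

noncomputable instance : AddCommGroup E3 := Pi.addCommGroup
noncomputable instance : Module ℚ E3 := Pi.module _ _ _

/-- Structure vectors: `e₁² = e₂² = e₂ + e₃` and `e₃² = -(e₂ + e₃)`. -/
def cvec : Fin 3 → E3 := ![![0, 1, 1], ![0, 1, 1], ![0, -1, -1]]

noncomputable instance : Mul E3 :=
  ⟨fun x y => ∑ i : Fin 3, ((x i) * (y i)) • cvec i⟩

lemma E3.mul_def (x y : E3) : x * y = ∑ i : Fin 3, ((x i) * (y i)) • cvec i := rfl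

noncomputable instance : NonUnitalNonAssocRing E3 :=
  { (inferInstance : AddCommGroup E3), (inferInstance : Mul E3) with
    left_distrib := by
      intro a b c
      show ∑ i : Fin 3, (a i * (b + c) i) • cvec i
          = (∑ i : Fin 3, (a i * b i) • cvec i) + ∑ i : Fin 3, (a i * c i) • cvec i
      rw [← Finset.sum_add_distrib]
      refine Finset.sum_congr rfl fun i _ => ?_
      show (a i * (b i + c i)) • cvec i = _
      rw [mul_add, add_smul]
    right_distrib := by
      intro a b c
      show ∑ i : Fin 3, ((a + b) i * c i) • cvec i
          = (∑ i : Fin 3, (a i * c i) • cvec i) + ∑ i : Fin 3, (b i * c i) • cvec i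
      rw [← Finset.sum_add_distrib]
      refine Finset.sum_congr rfl fun i _ => ?_
      show ((a i + b i) * c i) • cvec i = _
      rw [add_mul, add_smul]
    zero_mul := by
      intro a
      show ∑ i : Fin 3, ((0 : E3) i * a i) • cvec i = 0
      refine Finset.sum_eq_zero fun i _ => ?_
      show ((0 : ℚ) * a i) • cvec i = 0
      rw [zero_mul, zero_smul]
    mul_zero := by
      intro a
      show ∑ i : Fin 3, (a i * (0 : E3) i) • cvec i = 0
      refine Finset.sum_eq_zero fun i _ => ?_
      show (a i * (0 : ℚ)) • cvec i = 0
      rw [mul_zero, zero_smul] }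

instance : SMulCommClass ℚ E3 E3 := by
  constructor
  intro r x y
  show r • (x * y) = x * (r • y)
  rw [E3.mul_def, E3.mul_def, Finset.smul_sum]
  refine Finset.sum_congr rfl fun i _ => ?_
  show r • ((x i * y i) • cvec i) = (x i * (r * y i)) • cvec i
  rw [smul_smul, mul_left_comm]

instance : IsScalarTower ℚ E3 E3 := by
  constructor
  intro r x y
  show (r • x) * y = r • (x * y)
  rw [E3.mul_def, E3.mul_def, Finset.smul_sum]
  refine Finset.sum_congr rfl fun i _ => ?_
  show ((r * x i) * y i) • cvec i = r • ((x i * y i) • cvec i)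
  rw [smul_smul, mul_assoc]

/-- The natural basis `{e₁, e₂, e₃}` (the standard basis). -/
noncomputable def B3 : Module.Basis (Fin 3) ℚ E3 := Pi.basisFun ℚ (Fin 3)

/-! Every product in `E3` is a multiple of `u = e₂ + e₃`, namely
`x * y = (x₁y₁ + x₂y₂ - x₃y₃) • u`. So `span {u}` contains `A²` and is an ideal, and `u * u = 0`
because its coefficient is `1 - 1`. Conversely `x * eᵢ = ±xᵢ • u`, so `xA = 0` forces `x = 0`:
the annihilator vanishes and the zero ideal has the absorption property, whence `rad A = 0`,
which does not contain the nonzero ideal `span {u}`. -/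

section Radical

variable {K : Type*} [Field K] {A : Type*} [NonUnitalNonAssocRing A] [Module K A]

lemma isIdeal_of_forall_mul_mem {I : Submodule K A} (h : ∀ x y : A, x * y ∈ I) : IsIdeal I :=
  fun x _ a => ⟨h x a, h a x⟩

lemma isIdeal_bot : IsIdeal (⊥ : Submodule K A) := by
  intro x hx a
  rw [Submodule.mem_bot] at hx
  simp [hx]

lemma hasAbsorption_bot_iff :
    HasAbsorption (⊥ : Submodule K A) ↔ ∀ x : A, (∀ a : A, x * a = 0) → x = 0 := by
  simp only [HasAbsorption, Submodule.mem_bot]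

lemma npow_two (I : Submodule K A) : npow I 2 = smulSub I I := by
  rw [npow]
  simp [npow]

variable [SMulCommClass K A A] [IsScalarTower K A A]

lemma rad_eq_bot_of_forall_mul_eq_zero (h : ∀ x : A, (∀ a : A, x * a = 0) → x = 0) :
    rad K A = ⊥ :=
  eq_bot_iff.2 <| sInf_le ⟨isIdeal_bot, hasAbsorption_bot_iff.2 h⟩

lemma annSub_eq_bot_of_forall_mul_eq_zero (h : ∀ x : A, (∀ a : A, x * a = 0) → x = 0) :
    annSub K A = ⊥ :=
  eq_bot_iff.2 fun x hx => (Submodule.mem_bot K).2 <| h x fun a => (hx a).1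

lemma smulSub_span_singleton_self_eq_bot {u : A} (hu : u * u = 0) :
    smulSub (K ∙ u) (K ∙ u) = ⊥ := by
  rw [smulSub, Submodule.span_eq_bot]
  rintro _ ⟨x, hx, y, hy, rfl⟩
  obtain ⟨c, rfl⟩ := Submodule.mem_span_singleton.1 hx
  obtain ⟨d, rfl⟩ := Submodule.mem_span_singleton.1 hy
  simp only [smul_mul_smul_comm, hu, smul_zero]

end Radical

namespace E3

lemma add_apply (x y : E3) (k : Fin 3) : (x + y) k = x k + y k := rfl

lemma B3_apply (i k : Fin 3) : B3 i k = if k = i then 1 else 0 := by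
  show Pi.basisFun ℚ (Fin 3) i k = _
  rw [Pi.basisFun_apply, Pi.single_apply]

lemma B3_one_add_B3_two : B3 1 + B3 2 = (![0, 1, 1] : E3) := by
  funext k
  rw [add_apply, B3_apply, B3_apply]
  fin_cases k <;> simp

lemma cvec_eq : cvec = ![B3 1 + B3 2, B3 1 + B3 2, -(B3 1 + B3 2)] := by
  rw [B3_one_add_B3_two]
  funext i k
  fin_cases i <;> fin_cases k <;> rfl

lemma mul_eq (x y : E3) : x * y = (x 0 * y 0 + x 1 * y 1 - x 2 * y 2) • (B3 1 + B3 2) := by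
  rw [mul_def, Fin.sum_univ_three, cvec_eq]
  simp only [Matrix.cons_val]
  module

lemma B3_one_add_B3_two_ne_zero : B3 1 + B3 2 ≠ 0 := by
  rw [B3_one_add_B3_two]
  intro h
  exact one_ne_zero (congrFun h 1 : (1 : ℚ) = 0)

lemma mul_mem_span (x y : E3) : x * y ∈ ℚ ∙ (B3 1 + B3 2) :=
  mul_eq x y ▸ Submodule.smul_mem _ _ (Submodule.mem_span_singleton_self _)

lemma B3_apply_mul_B3_apply_of_ne {i j : Fin 3} (hij : i ≠ j) (k : Fin 3) :
    B3 i k * B3 j k = 0 := by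
  rw [B3_apply, B3_apply]
  split_ifs <;> simp_all

lemma B3_mul_self (i : Fin 3) :
    B3 i * B3 i = (if i = 2 then -1 else 1) • (B3 1 + B3 2) := by
  rw [mul_eq]
  congr 1
  fin_cases i <;> simp [B3_apply]

lemma mul_self_B3_one_add_B3_two : (B3 1 + B3 2) * (B3 1 + B3 2) = 0 := by
  rw [mul_eq]
  simp [add_apply, B3_apply]

lemma isNaturalBasis_B3 : IsNaturalBasis B3 := by
  intro i j hij
  simp [mul_eq, B3_apply_mul_B3_apply_of_ne hij]

lemma eq_zero_of_forall_mul_eq_zero (x : E3) (h : ∀ a, x * a = 0) : x = 0 := by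
  funext k
  have hk := h (B3 k)
  rw [mul_eq, smul_eq_zero_iff_left B3_one_add_B3_two_ne_zero] at hk
  show x k = 0
  fin_cases k <;> simpa [B3_apply] using hk

end E3

/-- Example: `A` is a 3-dimensional evolution algebra with natural basis
`{e₁, e₂, e₃}` with `e₁² = e₂² = -(e₃²) = e₂ + e₃`; the ideal
`I = span{e₂ + e₃}` is nonzero and nilpotent (`I² = 0`) yet not contained in
`rad(A)`, since `rad(A) = ann(A) = 0`. -/
theorem stmt14 :
    Module.finrank ℚ E3 = 3 ∧
    IsNaturalBasis B3 ∧
    B3 0 * B3 0 = B3 1 + B3 2 ∧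
    B3 1 * B3 1 = B3 1 + B3 2 ∧
    B3 2 * B3 2 = -(B3 1 + B3 2) ∧
    IsIdeal (Submodule.span ℚ {B3 1 + B3 2}) ∧
    Submodule.span ℚ {B3 1 + B3 2} ≠ ⊥ ∧
    npow (Submodule.span ℚ {B3 1 + B3 2}) 2 = ⊥ ∧
    ¬ Submodule.span ℚ {B3 1 + B3 2} ≤ rad ℚ E3 ∧
    rad ℚ E3 = ⊥ ∧
    annSub ℚ E3 = ⊥ := by
  have hI : ℚ ∙ (B3 1 + B3 2) ≠ ⊥ :=
    Submodule.span_singleton_eq_bot.not.2 E3.B3_one_add_B3_two_ne_zero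
  have hrad : rad ℚ E3 = ⊥ := rad_eq_bot_of_forall_mul_eq_zero E3.eq_zero_of_forall_mul_eq_zero
  refine ⟨Module.finrank_fin_fun ℚ, E3.isNaturalBasis_B3,
    by rw [E3.B3_mul_self, if_neg (by decide), one_smul],
    by rw [E3.B3_mul_self, if_neg (by decide), one_smul],
    by rw [E3.B3_mul_self, if_pos rfl, neg_one_smul],
    isIdeal_of_forall_mul_mem E3.mul_mem_span, hI, ?_, ?_, hrad,
    annSub_eq_bot_of_forall_mul_eq_zero E3.eq_zero_of_forall_mul_eq_zero⟩
  · rw [npow_two]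
    exact smulSub_span_singleton_self_eq_bot E3.mul_self_B3_one_add_B3_two
  · rwa [hrad, le_bot_iff]

end Example14
end

section
/- Let A be a finite-dimensional evolution algebra, I an ideal with the extension property, and B = {e_i}_{i ∈ Λ} a natural basis of A with I = span{e_i : i ∈ Λ'}, Λ' ⊆ Λ. Order B so that all indices of Λ' come before those of Λ \ Λ'. Then the structure matrix M_B has block lower-triangular form: the upper-left |Λ'| × |Λ'| block is the structure matrix of I relative to the natural basis {e_i}_{i∈Λ'}, the upper-right block is zero, and the lower-right block is the structure matrix of A/I relative to the natural basis {ē_i : i ∈ Λ \ Λ'}. -/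
open Submodule

/-!
The coordinates with respect to `B` of an element of `I = span (B '' Λ')` vanish outside `Λ'`,
so they restrict to coordinates on `I`; and the coordinates outside `Λ'` vanish exactly on `I`,
so they descend to coordinates on `A ⧸ I`. Both structure matrices are therefore read off
from `M_B`, once the products in `I` and `A ⧸ I` are computed in `A`.
-/

namespace Module.Basis

variable {R M ι : Type*} [Ring R] [AddCommGroup M] [Module R M] (b : Basis ι R M) (s : Set ι)

theorem map_repr_span_image :
    (span R (b '' s)).map b.repr.toLinearMap = Finsupp.supported R R s := by
  ext f
  constructor
  · rintro ⟨x, hx, rfl⟩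
    exact (Finsupp.mem_supported R _).2 (b.mem_span_image.1 hx)
  · intro hf
    refine ⟨b.repr.symm f, b.mem_span_image.2 ?_, by simp⟩
    simpa using (Finsupp.mem_supported R _).1 hf

noncomputable def spanImage : Basis s R (span R (b '' s)) :=
  .ofRepr <| (b.repr.ofSubmodules _ _ (b.map_repr_span_image s)).trans
    (Finsupp.supportedEquivFinsupp s)

theorem spanImage_repr_apply (x : span R (b '' s)) (k : s) :
    (b.spanImage s).repr x k = b.repr x k := rfl

theorem coe_spanImage_apply (i : s) : (b.spanImage s i : M) = b i := by
  simp [spanImage]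

theorem repr_eq_zero_of_mem_span_image {x : M} (hx : x ∈ span R (b '' s)) {k : ι}
    (hk : k ∉ s) : b.repr x k = 0 :=
  Finsupp.notMem_support_iff.1 fun h => hk (b.repr_support_subset_of_mem_span s hx h)

noncomputable def reprCompl : M →ₗ[R] {i // i ∉ s} →₀ R :=
  (Finsupp.lcomapDomain Subtype.val Subtype.val_injective).comp b.repr.toLinearMap

theorem ker_reprCompl : LinearMap.ker (b.reprCompl s) = span R (b '' s) := by
  ext x
  simp only [LinearMap.mem_ker, b.mem_span_image, Finsupp.ext_iff, Set.subset_def]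
  simp [reprCompl, not_imp_comm]

theorem reprCompl_surjective : Function.Surjective (b.reprCompl s) := fun g =>
  ⟨b.repr.symm (Finsupp.lmapDomain R R Subtype.val g), by
    simp only [reprCompl, LinearMap.comp_apply, LinearEquiv.coe_coe, LinearEquiv.apply_symm_apply]
    exact Finsupp.comapDomain_mapDomain _ Subtype.val_injective g⟩

noncomputable def quotientSpanImage : Basis {i // i ∉ s} R (M ⧸ span R (b '' s)) :=
  .ofRepr <| (quotEquivOfEq _ _ (b.ker_reprCompl s).symm).trans
    ((b.reprCompl s).quotKerEquivOfSurjective (b.reprCompl_surjective s))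

theorem quotientSpanImage_repr_mk (x : M) (k : {i // i ∉ s}) :
    (b.quotientSpanImage s).repr (Submodule.Quotient.mk x) k = b.repr x k := rfl

theorem quotientSpanImage_apply (i : {i // i ∉ s}) :
    b.quotientSpanImage s i = Submodule.Quotient.mk (b i) := by
  refine (b.quotientSpanImage s).repr.injective (Finsupp.ext fun k => ?_)
  rw [quotientSpanImage_repr_mk, repr_self, repr_self]
  exact (Finsupp.single_apply_left Subtype.val_injective i k 1).symm

end Module.Basis

section EvolutionAlgebra

variable {K : Type*} [Field K] {A : Type*} [NonUnitalNonAssocRing A] [Module K A]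

theorem coe_subMul {N : Submodule K A} (hN : IsIdeal N) (x y : N) :
    (subMul hN x y : A) = x * y := rfl

theorem quotMul_mk (I : Submodule K A) (hI : IsIdeal I) (a b : A) :
    quotMul I hI (Submodule.Quotient.mk a) (Submodule.Quotient.mk b) =
      Submodule.Quotient.mk (a * b) := rfl

end EvolutionAlgebra

theorem stmt15_general {K : Type*} [Field K] {A : Type*} [NonUnitalNonAssocRing A]
    [Module K A]
    {ι : Type*} (B : Module.Basis ι K A) (hB : IsNaturalBasis B)
    (Λ' : Set ι) (I : Submodule K A) (hI : IsIdeal I)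
    (hspan : I = Submodule.span K (B '' Λ')) :
    ∃ (B' : Module.Basis Λ' K I) (Bb : Module.Basis {i : ι // i ∉ Λ'} K (A ⧸ I)),
      (∀ i : Λ', (B' i : A) = B i.1) ∧
      (∀ i : {i : ι // i ∉ Λ'}, Bb i = Submodule.Quotient.mk (B i.1)) ∧
      -- B' is a natural basis of I, Bb is a natural basis of A/I
      (∀ i j : Λ', i ≠ j → subMul hI (B' i) (B' j) = 0) ∧
      (∀ i j : {i : ι // i ∉ Λ'}, i ≠ j → quotMul I hI (Bb i) (Bb j) = 0) ∧
      -- upper-right block of M_B is zero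
      (∀ i ∈ Λ', ∀ k ∉ Λ', B.repr (B i * B i) k = 0) ∧
      -- upper-left block of M_B is the structure matrix of I relative to B'
      (∀ i k : Λ', B'.repr (subMul hI (B' i) (B' i)) k = B.repr (B i.1 * B i.1) k.1) ∧
      -- lower-right block of M_B is the structure matrix of A/I relative to Bb
      (∀ i k : {i : ι // i ∉ Λ'},
        Bb.repr (quotMul I hI (Bb i) (Bb i)) k = B.repr (B i.1 * B i.1) k.1) := by
  subst hspan
  refine ⟨B.spanImage Λ', B.quotientSpanImage Λ', B.coe_spanImage_apply Λ',
    B.quotientSpanImage_apply Λ', ?_, ?_, ?_, ?_, ?_⟩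
  · intro i j hij
    ext
    rw [coe_subMul, B.coe_spanImage_apply, B.coe_spanImage_apply]
    exact hB _ _ (Subtype.val_injective.ne hij)
  · intro i j hij
    rw [B.quotientSpanImage_apply, B.quotientSpanImage_apply, quotMul_mk,
      hB _ _ (Subtype.val_injective.ne hij), Submodule.Quotient.mk_zero]
  · intro i hi k hk
    exact B.repr_eq_zero_of_mem_span_image Λ' (hI _ (subset_span ⟨i, hi, rfl⟩) (B i)).2 hk
  · intro i k
    rw [B.spanImage_repr_apply, coe_subMul, B.coe_spanImage_apply]
  · intro i k
    rw [B.quotientSpanImage_apply, quotMul_mk, B.quotientSpanImage_repr_mk]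

/-- Block lower-triangular form of the structure matrix relative to an ideal
with the extension property. -/
theorem stmt15 {K : Type*} [Field K] {A : Type*} [NonUnitalNonAssocRing A]
    [Module K A] [SMulCommClass K A A] [IsScalarTower K A A]
    {ι : Type*} [Fintype ι] (B : Module.Basis ι K A) (hB : IsNaturalBasis B)
    (Λ' : Set ι) (I : Submodule K A) (hI : IsIdeal I)
    (hspan : I = Submodule.span K (B '' Λ')) :
    ∃ (B' : Module.Basis Λ' K I) (Bb : Module.Basis {i : ι // i ∉ Λ'} K (A ⧸ I)),
      (∀ i : Λ', (B' i : A) = B i.1) ∧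
      (∀ i : {i : ι // i ∉ Λ'}, Bb i = Submodule.Quotient.mk (B i.1)) ∧
      -- B' is a natural basis of I, Bb is a natural basis of A/I
      (∀ i j : Λ', i ≠ j → subMul hI (B' i) (B' j) = 0) ∧
      (∀ i j : {i : ι // i ∉ Λ'}, i ≠ j → quotMul I hI (Bb i) (Bb j) = 0) ∧
      -- upper-right block of M_B is zero
      (∀ i ∈ Λ', ∀ k ∉ Λ', B.repr (B i * B i) k = 0) ∧
      -- upper-left block of M_B is the structure matrix of I relative to B'
      (∀ i k : Λ', B'.repr (subMul hI (B' i) (B' i)) k = B.repr (B i.1 * B i.1) k.1) ∧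
      -- lower-right block of M_B is the structure matrix of A/I relative to Bb
      (∀ i k : {i : ι // i ∉ Λ'},
        Bb.repr (quotMul I hI (Bb i) (Bb i)) k = B.repr (B i.1 * B i.1) k.1) :=
  stmt15_general B hB Λ' I hI hspan
end

section
/- Let A be a finite-dimensional nilpotent evolution algebra with dim(ann(A)) = 1. Then A is indecomposable, i.e., A cannot be written as a direct sum of two nonzero ideals. -/
open Submodule

/-!
In a nilpotent algebra every nonzero ideal `I` meets the annihilator: the chain
`I, IA + AI, (IA + AI)A + A(IA + AI), …` stays inside `I`, its `n`-th term lies in `Aⁿ⁺¹` and so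
eventually vanishes, and its last nonzero term is annihilated by `A`. If `ann(A)` is a line, it is
then contained in every nonzero ideal, so two nonzero ideals can never intersect trivially.
-/

theorem Submodule.eq_of_le_of_finrank_eq_one {K V : Type*} [DivisionRing K] [AddCommGroup V]
    [Module K V] {P W : Submodule K V} (hle : P ≤ W) (hW : Module.finrank K W = 1) (hP : P ≠ ⊥) :
    P = W := by
  have : FiniteDimensional K W := Module.finite_of_finrank_eq_succ hW
  have : FiniteDimensional K P := Submodule.finiteDimensional_of_le hle
  refine Submodule.eq_of_le_of_finrank_le hle ?_
  rwa [hW, Nat.one_le_iff_ne_zero, Ne, Submodule.finrank_eq_zero]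

section NilpotentAnnihilator

variable {K : Type*} [Field K] {A : Type*} [NonUnitalNonAssocRing A] [Module K A]

lemma smulSub_mono {I I' J J' : Submodule K A} (hI : I ≤ I') (hJ : J ≤ J') :
    smulSub I J ≤ smulSub I' J' :=
  Submodule.span_mono (Set.image2_subset hI hJ)

lemma mul_mem_smulSub {I J : Submodule K A} {x y : A} (hx : x ∈ I) (hy : y ∈ J) :
    x * y ∈ smulSub I J :=
  Submodule.subset_span (Set.mem_image2_of_mem hx hy)

def mulChain (I : Submodule K A) : ℕ → Submodule K A
  | 0 => I
  | n + 1 => smulSub (mulChain I n) ⊤ ⊔ smulSub ⊤ (mulChain I n)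

lemma mulChain_le_self {I : Submodule K A} (hI : IsIdealIn (⊤ : Submodule K A) I) :
    ∀ n, mulChain I n ≤ I
  | 0 => le_rfl
  | n + 1 => by
    have hn := mulChain_le_self hI n
    refine sup_le ?_ ?_ <;> rw [smulSub, Submodule.span_le]
    · rintro _ ⟨x, hx, y, -, rfl⟩
      exact (hI.2 x (hn hx) y trivial).1
    · rintro _ ⟨y, -, x, hx, rfl⟩
      exact (hI.2 x (hn hx) y trivial).2

lemma mulChain_le_npow (I : Submodule K A) :
    ∀ n, mulChain I n ≤ npow (⊤ : Submodule K A) (n + 1)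
  | 0 => by rw [npow]; exact le_top
  | n + 1 => by
    have npow_one : npow (⊤ : Submodule K A) 1 = ⊤ := by rw [npow]
    rw [npow]
    refine sup_le ?_ ?_
    · refine le_trans ?_ (le_iSup _ (⟨n, by omega⟩ : Fin (n + 1)))
      rw [show n + 1 - n = 1 by omega, npow_one]
      exact smulSub_mono (mulChain_le_npow I n) le_rfl
    · refine le_trans ?_ (le_iSup _ (⟨0, by omega⟩ : Fin (n + 1)))
      rw [Nat.sub_zero, npow_one]
      exact smulSub_mono le_rfl (mulChain_le_npow I n)

variable [SMulCommClass K A A] [IsScalarTower K A A]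

lemma mulChain_le_annSub_of_succ_eq_bot {I : Submodule K A} {m : ℕ}
    (h : mulChain I (m + 1) = ⊥) : mulChain I m ≤ annSub K A := by
  intro x hx a
  have hxa : x * a ∈ mulChain I (m + 1) := Submodule.mem_sup_left (mul_mem_smulSub hx trivial)
  have hax : a * x ∈ mulChain I (m + 1) := Submodule.mem_sup_right (mul_mem_smulSub trivial hx)
  rw [h, Submodule.mem_bot] at hxa hax
  exact ⟨hxa, hax⟩

lemma inf_annSub_ne_bot_of_npow_eq_bot {n : ℕ} (hnil : npow (⊤ : Submodule K A) (n + 1) = ⊥)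
    {I : Submodule K A} (hI : IsIdealIn (⊤ : Submodule K A) I) (hI0 : I ≠ ⊥) :
    I ⊓ annSub K A ≠ ⊥ := by
  have hn : mulChain I n = ⊥ := eq_bot_iff.mpr ((mulChain_le_npow I n).trans hnil.le)
  obtain ⟨m, hm, hm1⟩ := Nat.exists_not_and_succ_of_not_zero_of_exists
    (p := fun m => mulChain I m = ⊥) hI0 ⟨n, hn⟩
  intro h
  exact hm (eq_bot_iff.mpr <| h ▸
    le_inf (mulChain_le_self hI m) (mulChain_le_annSub_of_succ_eq_bot hm1))

lemma annSub_le_of_npow_eq_bot {n : ℕ} (hnil : npow (⊤ : Submodule K A) (n + 1) = ⊥)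
    (hann : Module.finrank K (annSub K A) = 1)
    {I : Submodule K A} (hI : IsIdealIn (⊤ : Submodule K A) I) (hI0 : I ≠ ⊥) :
    annSub K A ≤ I :=
  inf_eq_right.mp <| Submodule.eq_of_le_of_finrank_eq_one inf_le_right hann
    (inf_annSub_ne_bot_of_npow_eq_bot hnil hI hI0)

end NilpotentAnnihilator

theorem stmt17_general {K : Type*} [Field K] {A : Type*} [NonUnitalNonAssocRing A]
    [Module K A] [SMulCommClass K A A] [IsScalarTower K A A]
    (hnil : ∃ k : ℕ, 0 < k ∧ npow (⊤ : Submodule K A) k = ⊥)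
    (hann : Module.finrank K (annSub K A) = 1) :
    ¬ DecomposableIn (⊤ : Submodule K A) := by
  rintro ⟨I, J, hI, hJ, hI0, hJ0, hIJ, -⟩
  obtain ⟨k, hk, hk0⟩ := hnil
  obtain ⟨n, rfl⟩ := Nat.exists_eq_add_one_of_ne_zero hk.ne'
  have hann0 : annSub K A = ⊥ := eq_bot_iff.mpr <| hIJ ▸
    le_inf (annSub_le_of_npow_eq_bot hk0 hann hI hI0) (annSub_le_of_npow_eq_bot hk0 hann hJ hJ0)
  rw [hann0, finrank_bot] at hann
  exact zero_ne_one hann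

/-- A nilpotent evolution algebra with one-dimensional annihilator is
indecomposable. -/
theorem stmt17 {K : Type*} [Field K] {A : Type*} [NonUnitalNonAssocRing A]
    [Module K A] [SMulCommClass K A A] [IsScalarTower K A A]
    {ι : Type*} [Fintype ι] (B : Module.Basis ι K A) (hB : IsNaturalBasis B)
    (hnil : ∃ k : ℕ, 0 < k ∧ npow (⊤ : Submodule K A) k = ⊥)
    (hann : Module.finrank K (annSub K A) = 1) :
    ¬ DecomposableIn (⊤ : Submodule K A) :=
  stmt17_general hnil hann
end
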